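/- If γ ∈ (ℕ ∪ {−1})^N does not belong to C_g, then the subcomplex K_{g,γ}^• of the twisted complex is acyclic: its cohomology vanishes in every degree m ≥ 0. -/

import Mathlib

set_option synthInstance.maxHeartbeats 1000000
set_option maxHeartbeats 1000000

attribute [local instance] Classical.propDecidable

noncomputable section

open scoped TensorProduct

section QSA
variable (k : Type) [Field k] (N : ℕ) (q : Fin N → Fin N → k)

/-- The commutation relations of the quantum symmetric algebra. -/
inductive QRel : FreeAlgebra k (Fin N) → FreeAlgebra k (Fin N) → Prop
  | rel (i j : Fin N) : QRel (FreeAlgebra.ι k i * FreeAlgebra.ι k j)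
      (q i j • (FreeAlgebra.ι k j * FreeAlgebra.ι k i))

/-- The quantum symmetric algebra `A = S_q(V)`. -/
abbrev QSA := RingQuot (QRel k N q)

/-- The generator `x_i` of `S_q(V)`. -/
def X (i : Fin N) : QSA k N q := RingQuot.mkAlgHom k (QRel k N q) (FreeAlgebra.ι k i)

/-- The ordered monomial `x^α = x_1^{α_1} ⋯ x_N^{α_N}`. -/
def xpow (α : Fin N → ℕ) : QSA k N q := (List.ofFn fun i => X k N q i ^ α i).prod

end QSA

section Twisted
variable (k : Type) [Field k] (N : ℕ) (q : Fin N → Fin N → k) (lam : Fin N → k)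

/-- The total space `A ⊗ ∧(V^*)` of the twisted cochain complex, in the `k`-basis
`(x*)^{∧β}` of `∧(V^*)` indexed by subsets `β ⊆ {1,…,N}`: an element is a finitely
supported family of coefficients in `A`. -/
abbrev TwCochain := Finset (Fin N) →₀ QSA k N q

/-- The differential of the twisted complex,
`d*(x^α ⊗ (x*)^{∧β}) = Σ_{i : β_i = 0} (-1)^{β_1+⋯+β_i}
  [(∏_{s≤i} q_{s,i}^{β_s}) x_i x^α - λ_i (∏_{s≥i} q_{i,s}^{β_s}) x^α x_i] ⊗ (x*)^{∧(β+[i])}`. -/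
def dtw : TwCochain k N q →ₗ[k] TwCochain k N q :=
  Finsupp.lsum k fun S : Finset (Fin N) =>
    ∑ i ∈ Sᶜ,
      (Finsupp.lsingle (insert i S)).comp
        (((-1 : k) ^ (S.filter (fun s => s < i)).card) •
          ((∏ s ∈ S.filter (fun s => s ≤ i), q s i) • LinearMap.mulLeft k (X k N q i)
            - (lam i * ∏ s ∈ S.filter (fun s => i ≤ s), q i s) •
                LinearMap.mulRight k (X k N q i)))

/-- `ε(β,i) = (-1)^{β_1 + ⋯ + β_i}`. -/
def eps (β : Fin N → ℤ) (i : Fin N) : k :=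
  (-1 : k) ^ (∑ s ∈ Finset.univ.filter (fun s => s ≤ i), β s)

/-- The scalar `Ω_g(α, β, i)` of the paper. -/
def Omega (α β : Fin N → ℤ) (i : Fin N) : k :=
  if (∏ s, q i s ^ (α s - β s)) = lam i then 0
  else if β i ≠ 0 then 0
  else
    eps k N β i *
      ((∏ s ∈ Finset.univ.filter (fun s => s ≤ i), q i s ^ (α s - β s))
        - lam i * (∏ s ∈ Finset.univ.filter (fun s => i ≤ s), q s i ^ (α s - β s)))

/-- A subset `β ⊆ {1,…,N}`, considered as a `{0,1}`-vector in `ℤ^N`. -/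
def betaZ (S : Finset (Fin N)) : Fin N → ℤ := fun s => if s ∈ S then 1 else 0

/-- `K_{g,γ}^m`: the span of the basis elements `x^α ⊗ (x*)^{∧β}` with `|β| = m` and
`α - β = γ`, a subspace of the degree-`m` term of the twisted complex. -/
def KspanM (γ : Fin N → ℤ) (m : ℕ) : Submodule k (TwCochain k N q) :=
  Submodule.span k {f | ∃ (α : Fin N → ℕ) (S : Finset (Fin N)), S.card = m ∧
    (fun s => (α s : ℤ)) - betaZ N S = γ ∧ f = Finsupp.single S (xpow k N q α)}

/-- The set `C_g = {γ ∈ (ℕ ∪ {-1})^N : for each i, ∏_s q_{i,s}^{γ_s} = λ_i or γ_i = -1}`. -/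
def Cg : Set (Fin N → ℤ) :=
  {γ | ∀ i : Fin N, (∏ s, q i s ^ γ s) = lam i ∨ γ i = -1}

end Twisted

/-!
In the basis `x^α ⊗ (x*)^{∧β}` of `K_{g,γ}^•`, where `β` runs over the sets containing
`{i : γ_i = -1}` and `α = γ + β`, the twisted differential is the Koszul differential
`e_β ↦ Σ_{i ∉ β} ± c_i e_{β+[i]}` with `c_i = (∏_{s>i} q_{s,i}^{γ_s}) (∏_s q_{i,s}^{γ_s} - λ_i)`.
If `γ ∉ C_g` there is an `i₀` with `γ_{i₀} ≠ -1` and `c_{i₀} ≠ 0`, and contraction with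
`e_{i₀}^* / c_{i₀}` is a contracting homotopy of this Koszul complex. The identification is
faithful because the monomials `x^α` are nonzero, as their action on polynomials by
`q`-twisted multiplication shows.
-/

open Finset

section Koszul
variable {k ι : Type*} [Field k] [LinearOrder ι]

def koszulSign (S : Finset ι) (i : ι) : k := (-1 : k) ^ (S.filter (fun s => s < i)).card

lemma koszulSign_mul_self (S : Finset ι) (i : ι) :
    koszulSign (k := k) S i * koszulSign S i = 1 := by
  rw [koszulSign, ← mul_pow]
  norm_num

lemma koszulSign_div_mul_koszulSign_mul {a : k} (ha : a ≠ 0) (S : Finset ι) (i : ι) :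
    koszulSign S i / a * (koszulSign S i * a) = 1 := by
  field_simp
  linear_combination koszulSign_mul_self (k := k) S i

variable [DecidableEq ι]

lemma koszulSign_insert {S : Finset ι} {j : ι} (hj : j ∉ S) (i : ι) :
    koszulSign (k := k) (insert j S) i = (if j < i then -1 else 1) * koszulSign S i := by
  unfold koszulSign
  rw [filter_insert]
  split_ifs with h
  · rw [card_insert_of_notMem (by simp [hj]), pow_succ, mul_comm]
  · rw [one_mul]

lemma koszulSign_insert_mul_insert {W : Finset ι} {a b : ι} (hab : a ≠ b) (ha : a ∉ W)
    (hb : b ∉ W) :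
    koszulSign (k := k) (insert b W) a * koszulSign (insert a W) b
      = -(koszulSign W a * koszulSign W b) := by
  rw [koszulSign_insert hb, koszulSign_insert ha]
  rcases hab.lt_or_gt with h | h
  · simp [h, h.not_gt]
  · simp [h, h.not_gt]

variable (c : ι → k) (i₀ : ι)

def koszulHomotopy : (Finset ι →₀ k) →ₗ[k] Finset ι →₀ k :=
  Finsupp.lsum k fun S =>
    if i₀ ∈ S then (koszulSign (S.erase i₀) i₀ / c i₀) • Finsupp.lsingle (S.erase i₀) else 0

variable {c i₀}

lemma koszulHomotopy_single_insert {W : Finset ι} (h : i₀ ∉ W) (a : k) :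
    koszulHomotopy c i₀ (Finsupp.single (insert i₀ W) a)
      = (koszulSign W i₀ / c i₀) • Finsupp.single W a := by
  simp [koszulHomotopy, erase_insert h]

lemma koszulHomotopy_single_of_notMem {S : Finset ι} (h : i₀ ∉ S) (a : k) :
    koszulHomotopy c i₀ (Finsupp.single S a) = 0 := by
  simp [koszulHomotopy, h]

lemma koszulHomotopy_mem_supported {J : Finset ι} (hJ : i₀ ∉ J) {m : ℕ} {t : Finset ι →₀ k}
    (ht : t ∈ Finsupp.supported k k {S | S.card = m ∧ J ⊆ S}) :
    koszulHomotopy c i₀ t ∈ Finsupp.supported k k {S | S.card + 1 = m ∧ J ⊆ S} := by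
  rw [Finsupp.supported_eq_span_single] at ht
  refine Submodule.span_induction ?_ (by simp) (fun _ _ _ _ => by rw [map_add]; exact add_mem)
    (fun a _ _ h => by rw [map_smul]; exact Submodule.smul_mem _ a h) ht
  rintro _ ⟨S, ⟨hcard, hJS⟩, rfl⟩
  by_cases hS : i₀ ∈ S
  · obtain ⟨W, hW, rfl⟩ : ∃ W, i₀ ∉ W ∧ S = insert i₀ W :=
      ⟨S.erase i₀, notMem_erase _ _, (insert_erase hS).symm⟩
    rw [koszulHomotopy_single_insert hW]
    refine Submodule.smul_mem _ _ (Finsupp.single_mem_supported k _ ⟨?_, ?_⟩)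
    · rwa [card_insert_of_notMem hW] at hcard
    · exact fun j hj => (mem_insert.mp (hJS hj)).resolve_left (ne_of_mem_of_not_mem hj hJ)
  · rw [koszulHomotopy_single_of_notMem hS]
    exact zero_mem _

variable [Fintype ι]

variable (c) in
def koszulDiff : (Finset ι →₀ k) →ₗ[k] Finset ι →₀ k :=
  Finsupp.lsum k fun S => ∑ i ∈ Sᶜ, (koszulSign S i * c i) • Finsupp.lsingle (insert i S)

lemma koszulDiff_single (S : Finset ι) (a : k) :
    koszulDiff c (Finsupp.single S a)
      = ∑ i ∈ Sᶜ, (koszulSign S i * c i) • Finsupp.single (insert i S) a := by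
  simp [koszulDiff]

lemma koszulDiff_koszulHomotopy_add_single_of_notMem (hc : c i₀ ≠ 0) {S : Finset ι}
    (hS : i₀ ∉ S) (a : k) :
    koszulDiff c (koszulHomotopy c i₀ (Finsupp.single S a))
      + koszulHomotopy c i₀ (koszulDiff c (Finsupp.single S a)) = Finsupp.single S a := by
  rw [koszulHomotopy_single_of_notMem hS, map_zero, zero_add, koszulDiff_single, map_sum,
    sum_eq_single_of_mem i₀ (mem_compl.mpr hS)]
  · rw [map_smul, koszulHomotopy_single_insert hS, smul_smul, mul_comm,
      koszulSign_div_mul_koszulSign_mul hc, one_smul]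
  · intro i _ hi
    rw [map_smul, koszulHomotopy_single_of_notMem (by simp [hS, Ne.symm hi]), smul_zero]

lemma koszulDiff_koszulHomotopy_add_single_insert (hc : c i₀ ≠ 0) {W : Finset ι}
    (hW : i₀ ∉ W) (a : k) :
    koszulDiff c (koszulHomotopy c i₀ (Finsupp.single (insert i₀ W) a))
      + koszulHomotopy c i₀ (koszulDiff c (Finsupp.single (insert i₀ W) a))
      = Finsupp.single (insert i₀ W) a := by
  have hcompl : Wᶜ = insert i₀ (insert i₀ W)ᶜ := by
    rw [compl_insert, insert_erase (mem_compl.mpr hW)]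
  rw [koszulHomotopy_single_insert hW, map_smul, koszulDiff_single, hcompl,
    sum_insert (by simp), smul_add, smul_smul, koszulSign_div_mul_koszulSign_mul hc, one_smul,
    add_assoc, add_eq_left, koszulDiff_single, map_sum, smul_sum, ← sum_add_distrib]
  refine sum_eq_zero fun i hi => ?_
  have hi : i ∉ insert i₀ W := mem_compl.mp hi
  have hii₀ : i ≠ i₀ := fun h => hi (h ▸ mem_insert_self _ _)
  have hiW : i ∉ W := fun h => hi (mem_insert_of_mem h)
  rw [map_smul, insert_comm, koszulHomotopy_single_insert (by simp [hW, Ne.symm hii₀]),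
    smul_smul, smul_smul, ← add_smul]
  convert zero_smul k (Finsupp.single (insert i W) a) using 2
  field_simp
  linear_combination c i * koszulSign_insert_mul_insert (k := k) (Ne.symm hii₀) hW hiW

lemma koszulDiff_koszulHomotopy_add (hc : c i₀ ≠ 0) (t : Finset ι →₀ k) :
    koszulDiff c (koszulHomotopy c i₀ t) + koszulHomotopy c i₀ (koszulDiff c t) = t := by
  induction t using Finsupp.induction_linear with
  | zero => simp
  | add t u ht hu => simp only [map_add]; rw [add_add_add_comm, ht, hu]
  | single S a =>
    by_cases hS : i₀ ∈ S
    · rw [← insert_erase hS]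
      exact koszulDiff_koszulHomotopy_add_single_insert hc (notMem_erase _ _) a
    · exact koszulDiff_koszulHomotopy_add_single_of_notMem hc hS a

theorem koszulDiff_exact (hc : c i₀ ≠ 0) {J : Finset ι} (hJ : i₀ ∉ J) {m : ℕ}
    {t : Finset ι →₀ k} (ht : t ∈ Finsupp.supported k k {S | S.card = m ∧ J ⊆ S})
    (hδ : koszulDiff c t = 0) :
    ∃ u ∈ Finsupp.supported k k {S | S.card + 1 = m ∧ J ⊆ S}, koszulDiff c u = t :=
  ⟨koszulHomotopy c i₀ t, koszulHomotopy_mem_supported hJ ht, by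
    simpa [hδ] using koszulDiff_koszulHomotopy_add hc t⟩

end Koszul

section SkewCommute
variable {k A : Type*} [Field k] [Ring A] [Algebra k A]

lemma mul_pow_eq_smul_of_mul_eq_smul {y z : A} {c : k} (h : y * z = c • (z * y)) (n : ℕ) :
    y * z ^ n = c ^ n • (z ^ n * y) := by
  induction n with
  | zero => simp
  | succ n ih =>
    rw [pow_succ, ← mul_assoc, ih, smul_mul_assoc, mul_assoc, h, mul_smul_comm, smul_smul,
      ← mul_assoc, pow_succ]

lemma pow_mul_eq_smul_of_mul_eq_smul {y z : A} {c : k} (h : y * z = c • (z * y)) (n : ℕ) :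
    y ^ n * z = c ^ n • (z * y ^ n) := by
  induction n with
  | zero => simp
  | succ n ih =>
    rw [pow_succ, mul_assoc, h, mul_smul_comm, ← mul_assoc, ih, smul_mul_assoc, smul_smul,
      mul_assoc, ← pow_succ, ← pow_succ']

lemma mul_list_prod_ofFn_eq_smul (y : A) {n : ℕ} (f : Fin n → A) (c : Fin n → k)
    (h : ∀ j, y * f j = c j • (f j * y)) :
    y * (List.ofFn f).prod = (∏ j, c j) • ((List.ofFn f).prod * y) := by
  induction n with
  | zero => simp
  | succ n ih =>
    rw [List.ofFn_succ, List.prod_cons, ← mul_assoc, h, smul_mul_assoc, mul_assoc,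
      ih _ _ fun j => h j.succ, mul_smul_comm, smul_smul, Fin.prod_univ_succ, mul_assoc]

lemma list_prod_ofFn_mul_eq_smul (y : A) {n : ℕ} (f : Fin n → A) (c : Fin n → k)
    (h : ∀ j, f j * y = c j • (y * f j)) :
    (List.ofFn f).prod * y = (∏ j, c j) • (y * (List.ofFn f).prod) := by
  induction n with
  | zero => simp
  | succ n ih =>
    rw [List.ofFn_succ, List.prod_cons, mul_assoc, ih _ _ fun j => h j.succ, mul_smul_comm,
      ← mul_assoc, h, smul_mul_assoc, smul_smul, Fin.prod_univ_succ, mul_comm (c 0), mul_assoc]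

lemma list_prod_ofFn_mul_eq_smul_update (y : A) {n : ℕ} (f : Fin n → A) (c : Fin n → k)
    (i : Fin n) (h : ∀ j, i < j → f j * y = c j • (y * f j)) :
    (List.ofFn f).prod * y
      = (∏ j ∈ Finset.univ.filter (i < ·), c j) •
          (List.ofFn (Function.update f i (f i * y))).prod := by
  induction n with
  | zero => exact i.elim0
  | succ n ih =>
    rw [List.ofFn_succ, List.prod_cons, mul_assoc, List.ofFn_succ, List.prod_cons]
    induction i using Fin.cases with
    | zero =>
      rw [list_prod_ofFn_mul_eq_smul y _ _ fun j => h j.succ (Fin.succ_pos j), mul_smul_comm,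
        ← mul_assoc, Finset.prod_filter, Fin.prod_univ_succ]
      simp [Fin.succ_pos]
    | succ i =>
      rw [ih (fun j => f j.succ) (fun j => c j.succ) i
        (fun j hj => h j.succ (Fin.succ_lt_succ_iff.mpr hj)), mul_smul_comm,
        Finset.prod_filter, Finset.prod_filter, Fin.prod_univ_succ]
      simp only [Fin.succ_lt_succ_iff, Fin.not_lt_zero, if_false, one_mul,
        Function.update_of_ne (Fin.succ_ne_zero i).symm]
      congr 4
      ext j
      simp [Function.update_apply, Fin.succ_inj]

end SkewCommute

section Monomials
variable {k : Type} [Field k] {N : ℕ} (q : Fin N → Fin N → k)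

lemma X_mul_X (i j : Fin N) : X k N q i * X k N q j = q i j • (X k N q j * X k N q i) := by
  simpa only [X, map_mul, map_smul] using RingQuot.mkAlgHom_rel k (QRel.rel (q := q) i j)

lemma X_mul_xpow (α : Fin N → ℕ) (i : Fin N) :
    X k N q i * xpow k N q α = (∏ j, q i j ^ α j) • (xpow k N q α * X k N q i) :=
  mul_list_prod_ofFn_eq_smul _ _ _ fun j => mul_pow_eq_smul_of_mul_eq_smul (X_mul_X q i j) _

lemma xpow_mul_X (α : Fin N → ℕ) (i : Fin N) :
    xpow k N q α * X k N q i
      = (∏ j ∈ Finset.univ.filter (i < ·), q j i ^ α j) • xpow k N q (α + Pi.single i 1) := by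
  rw [xpow, list_prod_ofFn_mul_eq_smul_update _ _ _ i
    fun j _ => pow_mul_eq_smul_of_mul_eq_smul (X_mul_X q j i) _, xpow, ← pow_succ]
  congr 3
  ext j
  rcases eq_or_ne j i with rfl | hj <;> simp [*]

end Monomials

structure IsMulAntisymm {k ι : Type*} [Field k] (q : ι → ι → k) : Prop where
  ne_zero : ∀ i j, q i j ≠ 0
  diag : ∀ i, q i i = 1
  swap : ∀ i j, q j i = (q i j)⁻¹

section Representation
open MvPolynomial

section ScaleVars
variable {σ R : Type*} [CommSemiring R]

def scaleVars (c : σ → R) : MvPolynomial σ R →ₐ[R] MvPolynomial σ R :=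
  aeval fun s => C (c s) * X s

@[simp]
lemma scaleVars_X (c : σ → R) (s : σ) : scaleVars c (X s) = C (c s) * X s :=
  aeval_X _ _

lemma scaleVars_comp_scaleVars (c d : σ → R) :
    (scaleVars c).comp (scaleVars d) = scaleVars (c * d) :=
  algHom_ext fun s => by simp; ring

lemma scaleVars_one : scaleVars (1 : σ → R) = AlgHom.id R _ :=
  algHom_ext fun s => by simp

lemma scaleVars_scaleVars_comm (c d : σ → R) (p : MvPolynomial σ R) :
    scaleVars c (scaleVars d p) = scaleVars d (scaleVars c p) := by
  rw [← AlgHom.comp_apply, scaleVars_comp_scaleVars, mul_comm, ← scaleVars_comp_scaleVars,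
    AlgHom.comp_apply]

lemma scaleVars_injective {K : Type*} [Field K] {c : σ → K} (hc : ∀ s, c s ≠ 0) :
    Function.Injective (scaleVars c) := by
  refine Function.LeftInverse.injective (g := scaleVars c⁻¹) fun p => ?_
  rw [← AlgHom.comp_apply, scaleVars_comp_scaleVars,
    show c⁻¹ * c = 1 from funext fun s => inv_mul_cancel₀ (hc s), scaleVars_one, AlgHom.id_apply]

end ScaleVars

variable {k : Type} [Field k] {N : ℕ} (q : Fin N → Fin N → k)

def qShift (i : Fin N) : Module.End k (MvPolynomial (Fin N) k) :=
  LinearMap.mulLeft k (X i) ∘ₗ (scaleVars fun s => if s < i then q i s else 1).toLinearMap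

lemma qShift_injective (hq0 : ∀ i j, q i j ≠ 0) (i : Fin N) : Function.Injective (qShift q i) :=
  (mul_right_injective₀ (X_ne_zero i)).comp
    (scaleVars_injective fun s => by split_ifs <;> simp [hq0])

variable {q}

lemma qShift_mul_qShift (hq : IsMulAntisymm q) (i j : Fin N) :
    qShift q i * qShift q j = q i j • (qShift q j * qShift q i) := by
  have hscalar : (if j < i then q i j else 1) = q i j * if i < j then q j i else 1 := by
    rcases lt_trichotomy i j with h | rfl | h
    · simp [h, h.not_gt, hq.swap i j, hq.ne_zero]
    · simp [hq.diag]
    · simp [h, h.not_gt]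
  refine LinearMap.ext fun p => ?_
  simp only [qShift, Module.End.mul_apply, LinearMap.smul_apply, LinearMap.comp_apply,
    AlgHom.toLinearMap_apply, LinearMap.mulLeft_apply, map_mul, scaleVars_X, smul_eq_C_mul]
  rw [scaleVars_scaleVars_comm _ _ p, hscalar, C_mul]
  ring

def qShiftRep (hq : IsMulAntisymm q) :
    QSA k N q →ₐ[k] Module.End k (MvPolynomial (Fin N) k) :=
  RingQuot.liftAlgHom k ⟨FreeAlgebra.lift k (qShift q), fun _ _ h => by
    cases h with
    | rel i j =>
      simp only [map_mul, map_smul, FreeAlgebra.lift_ι_apply]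
      exact qShift_mul_qShift hq i j⟩

lemma qShiftRep_X (hq : IsMulAntisymm q) (i : Fin N) :
    qShiftRep hq (X k N q i) = qShift q i := by
  rw [qShiftRep, _root_.X, RingQuot.liftAlgHom_mkAlgHom_apply, FreeAlgebra.lift_ι_apply]

lemma xpow_ne_zero (hq : IsMulAntisymm q) (α : Fin N → ℕ) : xpow k N q α ≠ 0 := by
  have hrep :
      qShiftRep hq (xpow k N q α) = (List.ofFn fun i => qShift q i ^ α i).prod := by
    simp [xpow, map_list_prod, List.map_ofFn, Function.comp_def, qShiftRep_X]
  have hinj : Function.Injective (qShiftRep hq (xpow k N q α)) := by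
    rw [hrep]
    refine List.prod_induction (fun f : Module.End k _ => Function.Injective f)
      (fun f g hf hg => hf.comp hg) Function.injective_id ?_
    simp only [List.mem_ofFn, forall_exists_index]
    rintro _ i rfl
    rw [Module.End.coe_pow]
    exact (qShift_injective q hq.ne_zero i).iterate _
  intro h
  apply one_ne_zero (α := MvPolynomial (Fin N) k)
  apply hinj
  simp [h]

end Representation

section TwistedKoszul

variable {k : Type} [Field k] {N : ℕ} (q : Fin N → Fin N → k) (lam : Fin N → k) (γ : Fin N → ℤ)

def negOnes : Finset (Fin N) := univ.filter fun s => γ s = -1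

-- `toNat` truncates only if `γ s = -1` and `s ∉ S`; the lemmas below assume `negOnes γ ⊆ S`.
def monoExp (S : Finset (Fin N)) : Fin N → ℕ := fun s => (γ s + if s ∈ S then 1 else 0).toNat

def twistCoeff (i : Fin N) : k :=
  (∏ s ∈ univ.filter (i < ·), q s i ^ γ s) * ((∏ s, q i s ^ γ s) - lam i)

variable {γ}

lemma monoExp_cast (hγ : ∀ i, -1 ≤ γ i) {S : Finset (Fin N)} (hS : negOnes γ ⊆ S) (s : Fin N) :
    (monoExp γ S s : ℤ) = γ s + if s ∈ S then 1 else 0 := by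
  have := hγ s
  unfold monoExp
  split_ifs with hs
  · omega
  · have : γ s ≠ -1 := fun h => hs (hS (by simp [negOnes, h]))
    omega

lemma monoExp_add_single (hγ : ∀ i, -1 ≤ γ i) {S : Finset (Fin N)} (hS : negOnes γ ⊆ S)
    {i : Fin N} (hi : i ∉ S) : monoExp γ S + Pi.single i 1 = monoExp γ (insert i S) := by
  have hγi : -1 < γ i := (hγ i).lt_of_ne fun h => hi (hS (by simp [negOnes, h]))
  ext s
  rcases eq_or_ne s i with rfl | hs
  · simp [monoExp, hi]
    omega
  · simp [monoExp, hs]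

lemma prod_filter_eq_prod_ite {ι M : Type*} [Fintype ι] [CommMonoid M] (S : Finset ι)
    (p : ι → Prop) [DecidablePred p] (f : ι → M) :
    ∏ s ∈ S.filter p, f s = ∏ s, if s ∈ S ∧ p s then f s else 1 := by
  rw [← prod_filter]
  congr 1
  ext
  simp

-- The left side is the scalar by which `d*` maps `x^{monoExp γ S}` in component `S` to
-- `x^{monoExp γ (insert i S)}` in component `insert i S`.
lemma twistCoeff_eq (hq : IsMulAntisymm q) (hγ : ∀ i, -1 ≤ γ i) {S : Finset (Fin N)}
    (hS : negOnes γ ⊆ S) (i : Fin N) :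
    (∏ s ∈ S.filter (· ≤ i), q s i) *
        ((∏ s, q i s ^ monoExp γ S s) * ∏ s ∈ univ.filter (i < ·), q s i ^ monoExp γ S s)
      - lam i * (∏ s ∈ S.filter (i ≤ ·), q i s) *
          ∏ s ∈ univ.filter (i < ·), q s i ^ monoExp γ S s
      = twistCoeff q lam γ i := by
  obtain ⟨hq0, hq1, hqinv⟩ := hq
  have hexp : ∀ (s : Fin N) (x : k), x ^ monoExp γ S s = x ^ (γ s + if s ∈ S then 1 else 0) :=
    fun s x => by rw [← monoExp_cast hγ hS, zpow_natCast]
  have hA : (∏ s ∈ S.filter (i ≤ ·), q i s) * ∏ s ∈ univ.filter (i < ·), q s i ^ monoExp γ S s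
      = ∏ s ∈ univ.filter (i < ·), q s i ^ γ s := by
    simp only [prod_filter_eq_prod_ite, mem_univ, true_and, ← prod_mul_distrib, hexp]
    refine prod_congr rfl fun s _ => ?_
    rcases lt_trichotomy i s with h | rfl | h
    · by_cases hs : s ∈ S <;> simp [h, h.le, hs, hqinv i s, zpow_add_one₀, hq0]
      rw [mul_left_comm, mul_inv_cancel₀ (hq0 i s), mul_one]
    · simp [hq1]
    · simp [h.not_gt, h.not_ge]
  have hB : (∏ s ∈ S.filter (· ≤ i), q s i) * ∏ s, q i s ^ monoExp γ S s
      = (∏ s ∈ S.filter (i ≤ ·), q i s) * ∏ s, q i s ^ γ s := by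
    simp only [prod_filter_eq_prod_ite, ← prod_mul_distrib, hexp]
    refine prod_congr rfl fun s _ => ?_
    rcases lt_trichotomy i s with h | rfl | h
    · by_cases hs : s ∈ S <;> simp [h.le, h.not_ge, hs, zpow_add_one₀, hq0, mul_comm]
    · simp [hq1]
    · by_cases hs : s ∈ S <;> simp [h.le, h.not_ge, hs, zpow_add_one₀, hq0, hqinv s i]
      rw [mul_left_comm, mul_inv_cancel₀ (hq0 s i), mul_one]
  rw [twistCoeff, ← hA, ← mul_assoc, hB]
  ring

variable (γ) in
def toCochain : (Finset (Fin N) →₀ k) →ₗ[k] TwCochain k N q :=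
  Finsupp.lsum k fun S =>
    Finsupp.lsingle S ∘ₗ LinearMap.toSpanSingleton k _ (xpow k N q (monoExp γ S))

lemma toCochain_single (S : Finset (Fin N)) (a : k) :
    toCochain q γ (Finsupp.single S a) = Finsupp.single S (a • xpow k N q (monoExp γ S)) := by
  simp [toCochain]

lemma toCochain_apply (t : Finset (Fin N) →₀ k) (S : Finset (Fin N)) :
    toCochain q γ t S = t S • xpow k N q (monoExp γ S) := by
  induction t using Finsupp.induction_linear with
  | zero => simp
  | add t u ht hu => simp [ht, hu, add_smul]
  | single T a =>
    rw [toCochain_single]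
    rcases eq_or_ne T S with rfl | h <;> simp [*]

lemma toCochain_injective (hq : IsMulAntisymm q) : Function.Injective (toCochain q γ) := by
  refine (injective_iff_map_eq_zero _).mpr fun t ht => Finsupp.ext fun S => ?_
  have := congrArg (· S) ht
  simpa [toCochain_apply, xpow_ne_zero hq] using this

lemma dtw_single (S : Finset (Fin N)) (a : QSA k N q) :
    dtw k N q lam (Finsupp.single S a)
      = ∑ i ∈ Sᶜ, Finsupp.single (insert i S) (koszulSign (k := k) S i •
          ((∏ s ∈ S.filter (· ≤ i), q s i) • (X k N q i * a)
            - (lam i * ∏ s ∈ S.filter (i ≤ ·), q i s) • (a * X k N q i))) := by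
  rw [dtw, Finsupp.lsum_single, LinearMap.sum_apply]
  refine sum_congr rfl fun i _ => ?_
  simp only [LinearMap.comp_apply, LinearMap.smul_apply, LinearMap.sub_apply,
    LinearMap.mulLeft_apply, LinearMap.mulRight_apply, Finsupp.lsingle_apply, koszulSign]
  -- the two filters use different (but equal) decidability instances
  congr!

lemma dtw_toCochain_single (hq : IsMulAntisymm q) (hγ : ∀ i, -1 ≤ γ i) {S : Finset (Fin N)}
    (hS : negOnes γ ⊆ S) (a : k) :
    dtw k N q lam (toCochain q γ (Finsupp.single S a))
      = toCochain q γ (koszulDiff (twistCoeff q lam γ) (Finsupp.single S a)) := by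
  rw [toCochain_single, dtw_single, koszulDiff_single, map_sum]
  refine sum_congr rfl fun i hi => ?_
  rw [map_smul, toCochain_single, Finsupp.smul_single, mul_smul_comm, smul_mul_assoc,
    X_mul_xpow, xpow_mul_X, monoExp_add_single hγ hS (mem_compl.mp hi),
    ← twistCoeff_eq q lam hq hγ hS i]
  congr 1
  module

lemma dtw_toCochain (hq : IsMulAntisymm q) (hγ : ∀ i, -1 ≤ γ i) {t : Finset (Fin N) →₀ k}
    (ht : t ∈ Finsupp.supported k k {S | negOnes γ ⊆ S}) :
    dtw k N q lam (toCochain q γ t) = toCochain q γ (koszulDiff (twistCoeff q lam γ) t) := by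
  rw [Finsupp.supported_eq_span_single] at ht
  refine LinearMap.eqOn_span (f := dtw k N q lam ∘ₗ toCochain q γ)
    (g := toCochain q γ ∘ₗ koszulDiff (twistCoeff q lam γ)) ?_ ht
  rintro _ ⟨S, hS, rfl⟩
  exact dtw_toCochain_single q lam hq hγ hS 1

lemma KspanM_eq_map (hγ : ∀ i, -1 ≤ γ i) (m : ℕ) :
    KspanM k N q γ m
      = (Finsupp.supported k k {S | S.card = m ∧ negOnes γ ⊆ S}).map (toCochain q γ) := by
  rw [Finsupp.supported_eq_span_single, ← Submodule.span_image, Set.image_image, KspanM]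
  congr 1
  ext f
  simp only [toCochain_single, one_smul, Set.mem_ofPred_eq, Set.mem_image]
  constructor
  · rintro ⟨α, S, hcard, hα, rfl⟩
    have hαS : ∀ s, (α s : ℤ) = γ s + if s ∈ S then 1 else 0 := fun s => by
      have := congrFun hα s
      simp only [Pi.sub_apply, betaZ] at this
      omega
    have hS : negOnes γ ⊆ S := fun s hs => by
      by_contra h
      have := hαS s
      simp only [negOnes, mem_filter, mem_univ, true_and] at hs
      simp only [h, if_false] at this
      omega
    refine ⟨S, ⟨hcard, hS⟩, ?_⟩
    congr 2
    ext s
    exact_mod_cast (monoExp_cast hγ hS s).trans (hαS s).symm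
  · rintro ⟨S, ⟨hcard, hS⟩, rfl⟩
    refine ⟨monoExp γ S, S, hcard, funext fun s => ?_, rfl⟩
    simp only [Pi.sub_apply, betaZ, monoExp_cast hγ hS]
    ring

lemma twistCoeff_ne_zero (hq0 : ∀ i j, q i j ≠ 0) {i : Fin N}
    (h : (∏ s, q i s ^ γ s) ≠ lam i) :
    twistCoeff q lam γ i ≠ 0 :=
  mul_ne_zero (prod_ne_zero_iff.mpr fun s _ => zpow_ne_zero _ (hq0 s i)) (sub_ne_zero.mpr h)

theorem exists_dtw_toCochain_eq_of_dtw_eq_zero (hq : IsMulAntisymm q) (hγ : ∀ i, -1 ≤ γ i)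
    {i₀ : Fin N} (hc : twistCoeff q lam γ i₀ ≠ 0) (hi₀ : γ i₀ ≠ -1) {m : ℕ}
    {f : TwCochain k N q}
    (hf : f ∈ KspanM k N q γ m) (hdf : dtw k N q lam f = 0) :
    ∃ u ∈ Finsupp.supported k k {S | S.card + 1 = m ∧ negOnes γ ⊆ S},
      dtw k N q lam (toCochain q γ u) = f := by
  have hJ : i₀ ∉ negOnes γ := by simpa [negOnes] using hi₀
  rw [KspanM_eq_map q hγ] at hf
  obtain ⟨t, ht, rfl⟩ := hf
  rw [dtw_toCochain q lam hq hγ (Finsupp.supported_mono (fun _ h => h.2) ht),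
    ← map_zero (toCochain q γ)] at hdf
  obtain ⟨u, hu, rfl⟩ := koszulDiff_exact hc hJ ht (toCochain_injective q hq hdf)
  exact ⟨u, hu, dtw_toCochain q lam hq hγ (Finsupp.supported_mono (fun _ h => h.2) hu)⟩

end TwistedKoszul

theorem stmt10_general (k : Type) [Field k] (N : ℕ)
    (q : Fin N → Fin N → k) (hq0 : ∀ i j, q i j ≠ 0) (hq1 : ∀ i, q i i = 1)
    (hqinv : ∀ i j, q j i = (q i j)⁻¹)
    (lam : Fin N → k)
    (γ : Fin N → ℤ) (hγ : ∀ i, -1 ≤ γ i) (hγC : γ ∉ Cg k N q lam) :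
    -- vanishing of cohomology in degree 0:
    (∀ f ∈ KspanM k N q γ 0, dtw k N q lam f = 0 → f = 0) ∧
    -- vanishing of cohomology in every degree `m + 1 ≥ 1`:
    (∀ (m : ℕ), ∀ f ∈ KspanM k N q γ (m + 1), dtw k N q lam f = 0 →
      ∃ h ∈ KspanM k N q γ m, dtw k N q lam h = f) := by
  obtain ⟨i₀, hprod, hi₀⟩ : ∃ i, (∏ s, q i s ^ γ s) ≠ lam i ∧ γ i ≠ -1 := by
    simpa [Cg, not_forall, not_or] using hγC
  have hq : IsMulAntisymm q := ⟨hq0, hq1, hqinv⟩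
  have hc := twistCoeff_ne_zero q lam hq0 hprod
  constructor
  · intro f hf hdf
    obtain ⟨u, hu, rfl⟩ :=
      exists_dtw_toCochain_eq_of_dtw_eq_zero q lam hq hγ hc hi₀ hf hdf
    simp only [Nat.add_one_ne_zero, false_and, Set.ofPred_false, Finsupp.supported_empty,
      Submodule.mem_bot] at hu
    rw [hu, map_zero, map_zero]
  · intro m f hf hdf
    obtain ⟨u, hu, rfl⟩ :=
      exists_dtw_toCochain_eq_of_dtw_eq_zero q lam hq hγ hc hi₀ hf hdf
    refine ⟨toCochain q γ u, ?_, rfl⟩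
    rw [KspanM_eq_map q hγ]
    exact Submodule.mem_map_of_mem (by simpa using hu)

/-- Lemma 4.5 of the paper: if `γ ∈ (ℕ ∪ {-1})^N` does not belong to `C_g`, then the
subcomplex `K_{g,γ}^•` of the twisted complex is acyclic, i.e. its cohomology vanishes
in every degree `m ≥ 0`. -/
theorem stmt10 (k : Type) [Field k] [CharZero k] (N : ℕ) (hN : 0 < N)
    (q : Fin N → Fin N → k) (hq0 : ∀ i j, q i j ≠ 0) (hq1 : ∀ i, q i i = 1)
    (hqinv : ∀ i j, q j i = (q i j)⁻¹)
    (lam : Fin N → k) (hlam : ∀ i, lam i ≠ 0)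
    (γ : Fin N → ℤ) (hγ : ∀ i, -1 ≤ γ i) (hγC : γ ∉ Cg k N q lam) :
    -- vanishing of cohomology in degree 0:
    (∀ f ∈ KspanM k N q γ 0, dtw k N q lam f = 0 → f = 0) ∧
    -- vanishing of cohomology in every degree `m + 1 ≥ 1`:
    (∀ (m : ℕ), ∀ f ∈ KspanM k N q γ (m + 1), dtw k N q lam f = 0 →
      ∃ h ∈ KspanM k N q γ m, dtw k N q lam h = f) :=
  stmt10_general k N q hq0 hq1 hqinv lam γ hγ hγC
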